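/- arXiv:0809.4194 — 3 statements merged into one kernel-verified Lean document; each statement's English description precedes it below -/
import Mathlib

section
/- Suppose the aggregate offer rate is at least the capacity (c ≤ ρ) and at least one traffic class exceeds its agreed share (there exists i with s_i·c < ρ_i, equivalently u < ρ). Then the per-class bounding rates of the rate based call gapping strategy γ_g sum exactly to the capacity: ∑_{i∈I} g_i = c. In particular the total admitted rate is bounded by the capacity c. -/
open Finset

/-- Provisionally used capacity `u = ∑ i, min (sᵢ·c) ρᵢ`. -/
noncomputable def usedCap {I : Type*} [Fintype I] (c : ℝ) (s ρ : I → ℝ) : ℝ :=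
  ∑ i, min (s i * c) (ρ i)

/-- Bounding rate `gᵢ = min (ρᵢ) (sᵢ·c + (ρᵢ − sᵢ·c)·(c − u)/(ρ − u))` of the rate based
call gapping strategy `γ_g`. -/
noncomputable def boundRate {I : Type*} [Fintype I] (c : ℝ) (s ρ : I → ℝ) (i : I) : ℝ :=
  min (ρ i)
    (s i * c + (ρ i - s i * c) * ((c - usedCap c s ρ) / ((∑ j, ρ j) - usedCap c s ρ)))

/-- In overload (`c ≤ ρ`) with at least one class exceeding its agreed share,
the bounding rates of `γ_g` sum exactly to the capacity `c`; in particular any admitted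
rates bounded classwise by the `gᵢ` have total at most `c`. -/
theorem gamma_g_bounds_sum_to_capacity
    {I : Type*} [Fintype I] [Nonempty I]
    (c : ℝ) (s ρ : I → ℝ) (hc : 0 < c)
    (hs0 : ∀ i, 0 < s i) (hs1 : ∀ i, s i < 1) (hssum : ∑ i, s i = 1)
    (hρ : ∀ i, 0 ≤ ρ i)
    (hover : c ≤ ∑ i, ρ i)
    (hex : ∃ i, s i * c < ρ i) :
    (∑ i, boundRate c s ρ i) = c ∧
      ∀ a : I → ℝ, (∀ i, a i ≤ boundRate c s ρ i) → (∑ i, a i) ≤ c := by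
  set u := usedCap c s ρ with hu
  set R := ∑ j, ρ j with hR
  -- u < R
  have huR : u < R := by
    obtain ⟨i₀, hi₀⟩ := hex
    refine Finset.sum_lt_sum (fun i _ => min_le_right _ _) ⟨i₀, Finset.mem_univ _, ?_⟩
    exact min_lt_iff.mpr (Or.inl hi₀)
  -- u ≤ c
  have huc : u ≤ c := by
    have : u ≤ ∑ i, s i * c := Finset.sum_le_sum (fun i _ => min_le_left _ _)
    simpa [← Finset.sum_mul, hssum] using this
  set t := (c - u) / (R - u) with ht
  have hRu : (0 : ℝ) < R - u := by linarith
  have ht1 : t ≤ 1 := by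
    rw [ht, div_le_one hRu]; linarith
  have key : ∀ i, boundRate c s ρ i = min (s i * c) (ρ i) + (ρ i - min (s i * c) (ρ i)) * t := by
    intro i
    rcases le_total (ρ i) (s i * c) with h | h
    · have : ρ i ≤ s i * c + (ρ i - s i * c) * t := by nlinarith
      simp [boundRate, min_eq_left this, min_eq_right h, ← hu, ← hR, ← ht]
    · have : s i * c + (ρ i - s i * c) * t ≤ ρ i := by nlinarith
      simp [boundRate, min_eq_right this, min_eq_left h, ← hu, ← hR, ← ht]
  have hsum : (∑ i, boundRate c s ρ i) = c := by
    have : (∑ i, boundRate c s ρ i) = u + (R - u) * t := by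
      simp only [key]
      rw [Finset.sum_add_distrib, ← Finset.sum_mul, Finset.sum_sub_distrib]
      simp only [hu, usedCap, hR]
    rw [this, ht, mul_div_cancel₀ _ (ne_of_gt hRu)]
    ring
  exact ⟨hsum, fun a ha => hsum ▸ Finset.sum_le_sum (fun i _ => ha i)⟩
end

section
/- If a traffic class j does not exceed its agreed share, i.e. ρ_j ≤ s_j·c, and the system is overloaded (c ≤ ρ) with at least one class exceeding its share (there exists i with s_i·c < ρ_i), then the bounding rate of class j equals its offer rate: g_j = ρ_j. Hence every offer of a class staying within its agreed share is admitted by the strategy γ_g, i.e. γ_g meets the minimum-share requirement (Requirement-C). -/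
open Finset

/-- A class staying within its agreed share (`ρ_j ≤ s_j·c`) gets bounding rate
equal to its offer rate, `g_j = ρ_j`: `γ_g` meets the minimum-share requirement
(Requirement-C). -/
theorem gamma_g_meets_requirement_C
    {I : Type*} [Fintype I] [Nonempty I]
    (c : ℝ) (s ρ : I → ℝ) (hc : 0 < c)
    (hs0 : ∀ i, 0 < s i) (hs1 : ∀ i, s i < 1) (hssum : ∑ i, s i = 1)
    (hρ : ∀ i, 0 ≤ ρ i)
    (hover : c ≤ ∑ i, ρ i)
    (hex : ∃ i, s i * c < ρ i)
    (j : I) (hj : ρ j ≤ s j * c) :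
    boundRate c s ρ j = ρ j := by
  obtain ⟨i0, hi0⟩ := hex
  set u := usedCap c s ρ with hu
  have hult : u < ∑ i, ρ i := by
    rw [hu, usedCap]
    apply Finset.sum_lt_sum (fun i _ => min_le_right _ _)
    exact ⟨i0, Finset.mem_univ _, by rw [min_eq_left hi0.le]; exact hi0⟩
  have huc : u ≤ c := by
    rw [hu, usedCap]
    calc ∑ i, min (s i * c) (ρ i) ≤ ∑ i, s i * c :=
          Finset.sum_le_sum (fun i _ => min_le_left _ _)
      _ = c := by rw [← Finset.sum_mul, hssum, one_mul]
  have hden : (0:ℝ) < (∑ i, ρ i) - u := by linarith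
  have ht1 : (c - u) / ((∑ i, ρ i) - u) ≤ 1 := by
    rw [div_le_one hden]; linarith
  have key : ρ j ≤ s j * c + (ρ j - s j * c) * ((c - u) / ((∑ i, ρ i) - u)) := by
    nlinarith [mul_nonneg (sub_nonneg.2 hj) (sub_nonneg.2 ht1)]
  rw [boundRate, min_eq_left key]
end

section
/- If a traffic class j offers at a rate at least its agreed share, i.e. ρ_j ≥ s_j·c, and the system is overloaded (c ≤ ρ) with at least one class exceeding its share (there exists i with s_i·c < ρ_i), then class j's bounding rate satisfies s_j·c ≤ g_j ≤ ρ_j: every overloaded class is guaranteed at least its agreed share s_j·c of the capacity by the strategy γ_g, and no class is granted more than its offered rate. -/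
open Finset

/-- An overloaded class (`ρ_j ≥ s_j·c`) is guaranteed at least its agreed share
and is never granted more than its offered rate: `s_j·c ≤ g_j ≤ ρ_j`. -/
theorem gamma_g_guarantees_agreed_share
    {I : Type*} [Fintype I] [Nonempty I]
    (c : ℝ) (s ρ : I → ℝ) (hc : 0 < c)
    (hs0 : ∀ i, 0 < s i) (hs1 : ∀ i, s i < 1) (hssum : ∑ i, s i = 1)
    (hρ : ∀ i, 0 ≤ ρ i)
    (hover : c ≤ ∑ i, ρ i)
    (hex : ∃ i, s i * c < ρ i)
    (j : I) (hj : s j * c ≤ ρ j) :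
    s j * c ≤ boundRate c s ρ j ∧ boundRate c s ρ j ≤ ρ j := by
  have huc : usedCap c s ρ ≤ c := by
    have : usedCap c s ρ ≤ ∑ i, s i * c := by
      apply Finset.sum_le_sum
      intro i _
      exact min_le_left _ _
    simpa [← Finset.sum_mul, hssum] using this
  have huρ : usedCap c s ρ < ∑ i, ρ i := by
    obtain ⟨i0, hi0⟩ := hex
    apply Finset.sum_lt_sum
    · intro i _; exact min_le_right _ _
    · exact ⟨i0, Finset.mem_univ i0, by simp [min_lt_iff, hi0]⟩
  have hfrac : 0 ≤ (c - usedCap c s ρ) / ((∑ j, ρ j) - usedCap c s ρ) :=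
    div_nonneg (by linarith) (by linarith)
  constructor
  · apply le_min hj
    nlinarith [mul_nonneg (by linarith : (0:ℝ) ≤ ρ j - s j * c) hfrac]
  · exact min_le_left _ _
end
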